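/- Let (𝔖,𝒞) be an instance of Exact 3-Cover with |𝔖| = 3t and 𝒞 = {C1,…,Cm} a collection of pairwise distinct 3-element subsets of 𝔖 with m > t. Construct the properly 2-colored digraph (G,σ) with colors black and white as follows: a bi-clique S containing a black vertex s_b and a white vertex s_w for every s ∈ 𝔖 (so S induces r := 18t² arcs); for each i, bi-cliques X_i with r black and r white vertices and Y_i with q black and q white vertices, where q := 3(6r(m−t)+r−18t); all arcs (x,y) with x ∈ X_i, y ∈ Y_i, σ(x)≠σ(y); and, for every s ∈ C_i, arcs (x,s_b) for every white x ∈ X_i and (x,s_w) for every black x ∈ X_i. Set k := 6r(m−t)+r−18t. Then 𝒞 contains an exact cover of 𝔖 if and only if there exists an arc set F with |F| ≤ k such that (G△F,σ) is a best match graph; moreover, in the affirmative case such an F can be chosen to consist only of arc deletions. -/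

import Mathlib

/-- A rooted (phylogenetic) tree on leaf set `V`, encoded by its hierarchy of
clusters `L(T(v))`, `v ∈ V(T)`: a rooted tree on leaf set `V` corresponds
exactly to a family of nonempty, pairwise compatible subsets of `V` containing
all singletons and `V` itself.  Together with a coloring `σ : V → M` this is a
leaf-colored tree. -/
structure PhyloTree (V : Type) where
  clusters : Set (Set V)
  compat : ∀ p ∈ clusters, ∀ q ∈ clusters, p ⊆ q ∨ q ⊆ p ∨ p ∩ q = ∅
  singleton_mem : ∀ v : V, {v} ∈ clusters
  univ_mem : Set.univ ∈ clusters
  nonempty_mem : ∀ p ∈ clusters, p.Nonempty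

namespace PhyloTree

variable {V M : Type}

/-- The cluster `L(T(lca(x,y)))` of the last common ancestor of `x` and `y`;
for inner vertices `u,v` of a tree one has `u ⪯_T v ↔ L(T(u)) ⊆ L(T(v))`. -/
def lcaSet (T : PhyloTree V) (x y : V) : Set V :=
  ⋂₀ {p : Set V | p ∈ T.clusters ∧ x ∈ p ∧ y ∈ p}

/-- `T` displays the triple `xy|z`, i.e. `lca(x,y) ≺ lca(x,z) = lca(y,z)`. -/
def Displays (T : PhyloTree V) (x y z : V) : Prop :=
  T.lcaSet x y ⊂ T.lcaSet x z ∧ T.lcaSet x z = T.lcaSet y z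

/-- `y` is a best match of `x` in the leaf-colored tree `(T,σ)`. -/
def BestMatch (T : PhyloTree V) (σ : V → M) (x y : V) : Prop :=
  σ x ≠ σ y ∧ ∀ y' : V, σ y' = σ y → T.lcaSet x y ⊆ T.lcaSet x y'

end PhyloTree

variable {V M : Type}

/-- `(T,σ)` explains `(G,σ)`, i.e. `(G,σ) = G(T,σ)`. -/
def Explains (T : PhyloTree V) (σ : V → M) (G : V → V → Prop) : Prop :=
  ∀ x y : V, G x y ↔ T.BestMatch σ x y

/-- `(G,σ)` is a best match graph. -/
def IsBMG (G : V → V → Prop) (σ : V → M) : Prop :=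
  ∃ T : PhyloTree V, Explains T σ G

/-- The triple `xy|y'` is informative for `(G,σ)`. -/
def InformativeTriple (G : V → V → Prop) (σ : V → M) (x y y' : V) : Prop :=
  x ≠ y ∧ x ≠ y' ∧ y ≠ y' ∧ σ x ≠ σ y ∧ σ y = σ y' ∧ G x y ∧ ¬ G x y'

/-- The triple `xy|y'` is forbidden for `(G,σ)`. -/
def ForbiddenTriple (G : V → V → Prop) (σ : V → M) (x y y' : V) : Prop :=
  x ≠ y ∧ x ≠ y' ∧ y ≠ y' ∧ σ x ≠ σ y ∧ σ y = σ y' ∧ G x y ∧ G x y'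

/-- `(G,σ)` is sf-colored: `σ` is proper and every vertex has an out-neighbor
of every color present in the graph other than its own. -/
def SfColored (G : V → V → Prop) (σ : V → M) : Prop :=
  (∀ x y : V, G x y → σ x ≠ σ y) ∧
  ∀ (x : V) (s : M), (∃ v : V, σ v = s) → s ≠ σ x → ∃ y : V, σ y = s ∧ G x y

/-- Vertex set of the graph constructed in the reduction from Exact 3-Cover:
the `S`-part `𝔖 × {black,white}`, the bi-cliques `X_i` (with `r` vertices of
each color) and `Y_i` (with `q` vertices of each color); the Boolean component
is the color (`true` = black). -/
abbrev X3CVert (S : Type) (m r q : ℕ) : Type :=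
  (S ⊕ (Fin m × Fin r) ⊕ (Fin m × Fin q)) × Bool

/-- Arcs of the reduction graph: `S` is a bi-clique; each `X_i` and each `Y_i`
is a bi-clique; all arcs from `X_i` to differently colored vertices of `Y_i`;
arcs from white vertices of `X_i` to `s_b` and from black vertices of `X_i`
to `s_w` for every `s ∈ C_i`. -/
def x3cArcs {S : Type} [DecidableEq S] {m r q : ℕ} (C : Fin m → Finset S) :
    X3CVert S m r q → X3CVert S m r q → Prop
  | (Sum.inl _, c), (Sum.inl _, c') => c ≠ c'
  | (Sum.inr (Sum.inl (i, _)), c), (Sum.inr (Sum.inl (j, _)), c') => i = j ∧ c ≠ c'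
  | (Sum.inr (Sum.inr (i, _)), c), (Sum.inr (Sum.inr (j, _)), c') => i = j ∧ c ≠ c'
  | (Sum.inr (Sum.inl (i, _)), c), (Sum.inr (Sum.inr (j, _)), c') => i = j ∧ c ≠ c'
  | (Sum.inr (Sum.inl (i, _)), c), (Sum.inl s, c') => s ∈ C i ∧ c ≠ c'
  | _, _ => False
namespace PhyloTree

variable {V : Type}

lemma mem_lcaSet_left (T : PhyloTree V) (x y : V) : x ∈ T.lcaSet x y :=
  Set.mem_sInter.2 fun _ hp => hp.2.1

lemma mem_lcaSet_right (T : PhyloTree V) (x y : V) : y ∈ T.lcaSet x y :=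
  Set.mem_sInter.2 fun _ hp => hp.2.2

lemma lcaSet_subset (T : PhyloTree V) {K : Set V} {x y : V}
    (hK : K ∈ T.clusters) (hx : x ∈ K) (hy : y ∈ K) : T.lcaSet x y ⊆ K :=
  Set.sInter_subset_of_mem ⟨hK, hx, hy⟩

lemma lcaSet_mono (T : PhyloTree V) {x y z : V} (hz : z ∈ T.lcaSet x y) :
    T.lcaSet x z ⊆ T.lcaSet x y := by
  intro a ha
  refine Set.mem_sInter.2 fun p hp => ?_
  have hzp : z ∈ p := Set.mem_sInter.1 hz p hp
  exact Set.mem_sInter.1 ha p ⟨hp.1, hp.2.1, hzp⟩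

lemma lcaSet_comparable (T : PhyloTree V) {a b c d z : V}
    (h1 : z ∈ T.lcaSet a b) (h2 : z ∈ T.lcaSet c d) :
    T.lcaSet a b ⊆ T.lcaSet c d ∨ T.lcaSet c d ⊆ T.lcaSet a b := by
  by_cases hsub : T.lcaSet a b ⊆ T.lcaSet c d
  · exact Or.inl hsub
  · right
    rw [Set.not_subset] at hsub
    obtain ⟨w, hw, hwn⟩ := hsub
    rw [lcaSet, Set.mem_sInter] at hwn
    push_neg at hwn
    obtain ⟨q, hq, hwq⟩ := hwn
    intro e he
    refine Set.mem_sInter.2 fun p hp => ?_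
    have hzp : z ∈ p := Set.mem_sInter.1 h1 p hp
    have hzq : z ∈ q := Set.mem_sInter.1 h2 q hq
    rcases T.compat p hp.1 q hq.1 with h | h | h
    · exact absurd (h (Set.mem_sInter.1 hw p hp)) hwq
    · exact h (Set.mem_sInter.1 he q hq)
    · have hzpq : z ∈ p ∩ q := ⟨hzp, hzq⟩
      rw [h] at hzpq
      exact absurd hzpq (Set.notMem_empty z)

end PhyloTree

section BoolBMG

variable {V : Type} {T : PhyloTree V} {σ : V → Bool} {G : V → V → Prop}

lemma bm_arc (hG : Explains T σ G) {x y : V} (h : G x y) : σ y = !σ x := by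
  have h1 := ((hG x y).1 h).1
  cases hx : σ x <;> cases hy : σ y <;> simp_all

lemma arc_of_mem (hG : Explains T σ G) {x v z : V} (hxv : G x v)
    (hz : z ∈ T.lcaSet x v) (hc : σ z = !σ x) : G x z := by
  have hbm := (hG x v).1 hxv
  refine (hG x z).2 ⟨by rw [hc]; cases σ x <;> simp, fun y' hy' => ?_⟩
  have h1 : T.lcaSet x z ⊆ T.lcaSet x v := T.lcaSet_mono hz
  have h2 : T.lcaSet x v ⊆ T.lcaSet x y' := hbm.2 y' (by rw [hy', hc, bm_arc hG hxv])
  exact h1.trans h2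

lemma mem_ball (hG : Explains T σ G) {x v y : V} (hxv : G x v) (hxy : G x y) :
    y ∈ T.lcaSet x v := by
  have hbm := (hG x y).1 hxy
  have h2 := hbm.2 v (by rw [bm_arc hG hxv, bm_arc hG hxy])
  exact h2 (T.mem_lcaSet_right x y)

lemma conf (hG : Explains T σ G) {x u v : V} (hxv : G x v) (huv : G u v) :
    (∀ y, G x y → G u y) ∨ (∀ y, G u y → G x y) := by
  have hux : σ u = σ x := by
    have h1 := bm_arc hG hxv; have h2 := bm_arc hG huv
    cases hx : σ x <;> cases hu : σ u <;> simp_all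
  rcases T.lcaSet_comparable (T.mem_lcaSet_right x v) (T.mem_lcaSet_right u v) with h | h
  · left; intro y hxy
    exact arc_of_mem hG huv (h (mem_ball hG hxv hxy)) (by rw [bm_arc hG hxy, hux])
  · right; intro y huy
    exact arc_of_mem hG hxv (h (mem_ball hG huv huy)) (by rw [bm_arc hG huy, hux])

/-- every vertex of a finite 2-colored BMG with both colors present has an
out-neighbor -/
lemma exists_out [Fintype V] (hG : Explains T σ G) (x : V) {w : V}
    (hw : σ w = !σ x) : ∃ y, G x y := by
  classical
  obtain ⟨v, hv, hmin⟩ :=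
    Finset.exists_min_image (Finset.univ.filter fun y => σ y = !σ x)
      (fun y => (T.lcaSet x y).toFinset.card)
      ⟨w, by simp [hw]⟩
  refine ⟨v, (hG x v).2 ⟨?_, fun y' hy' => ?_⟩⟩
  · have := (Finset.mem_filter.1 hv).2
    rw [this]; cases σ x <;> simp
  · have hv2 := (Finset.mem_filter.1 hv).2
    have hy2 : σ y' = !σ x := by rw [hy', hv2]
    have hle := hmin y' (by simp [hy2])
    rcases T.lcaSet_comparable (T.mem_lcaSet_left x v) (T.mem_lcaSet_left x y') with h | h
    · exact h
    · have hsub : (T.lcaSet x y').toFinset ⊆ (T.lcaSet x v).toFinset := by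
        intro a ha; rw [Set.mem_toFinset] at *; exact h (by simpa using ha)
      have : (T.lcaSet x y').toFinset = (T.lcaSet x v).toFinset :=
        Finset.eq_of_subset_of_card_le hsub hle
      intro a ha
      have : a ∈ (T.lcaSet x y').toFinset := by rw [this]; simpa using ha
      simpa using this
end BoolBMG
section Vert

variable {S : Type} [DecidableEq S] {m r q : ℕ}

/-- black/white vertex of the `S`-part -/
def SB (s : S) (c : Bool) : X3CVert S m r q := (Sum.inl s, c)
/-- vertex of `X_i` -/
def XV (i : Fin m) (p : Fin r) (c : Bool) : X3CVert S m r q := (Sum.inr (Sum.inl (i, p)), c)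
/-- vertex of `Y_i` -/
def YV (i : Fin m) (p : Fin q) (c : Bool) : X3CVert S m r q := (Sum.inr (Sum.inr (i, p)), c)

/-- the sort of a vertex: 0 = S-part, 1 = X-part, 2 = Y-part -/
def srt : X3CVert S m r q → ℕ
  | (Sum.inl _, _) => 0
  | (Sum.inr (Sum.inl _), _) => 1
  | (Sum.inr (Sum.inr _), _) => 2

/-- the index of a vertex, relative to an assignment `f` of elements of `S`
to triples -/
def idx (f : S → Fin m) : X3CVert S m r q → Fin m
  | (Sum.inl s, _) => f s
  | (Sum.inr (Sum.inl (i, _)), _) => i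
  | (Sum.inr (Sum.inr (i, _)), _) => i

variable (C : Fin m → Finset S)

lemma arcs_SS (s s' : S) (c c' : Bool) :
    x3cArcs (r := r) (q := q) C (SB s c) (SB s' c') ↔ c ≠ c' := Iff.rfl
lemma arcs_XX (i j : Fin m) (p p' : Fin r) (c c' : Bool) :
    x3cArcs (q := q) C (XV i p c) (XV j p' c') ↔ i = j ∧ c ≠ c' := Iff.rfl
lemma arcs_YY (i j : Fin m) (p p' : Fin q) (c c' : Bool) :
    x3cArcs (r := r) C (YV i p c) (YV j p' c') ↔ i = j ∧ c ≠ c' := Iff.rfl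
lemma arcs_XY (i j : Fin m) (p : Fin r) (p' : Fin q) (c c' : Bool) :
    x3cArcs C (XV i p c) (YV j p' c') ↔ i = j ∧ c ≠ c' := Iff.rfl
lemma arcs_XS (i : Fin m) (p : Fin r) (s : S) (c c' : Bool) :
    x3cArcs (q := q) C (XV i p c) (SB s c') ↔ s ∈ C i ∧ c ≠ c' := Iff.rfl
lemma arcs_SX (s : S) (i : Fin m) (p : Fin r) (c c' : Bool) :
    x3cArcs (q := q) C (SB s c) (XV i p c') ↔ False := Iff.rfl
lemma arcs_SY (s : S) (i : Fin m) (p : Fin q) (c c' : Bool) :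
    x3cArcs (r := r) C (SB s c) (YV i p c') ↔ False := Iff.rfl
lemma arcs_YX (i j : Fin m) (p : Fin q) (p' : Fin r) (c c' : Bool) :
    x3cArcs C (YV i p c) (XV j p' c') ↔ False := Iff.rfl
lemma arcs_YS (i : Fin m) (p : Fin q) (s : S) (c c' : Bool) :
    x3cArcs (r := r) C (YV i p c) (SB s c') ↔ False := Iff.rfl

lemma arcs_SS' (s s' : S) (c c' : Bool) :
    x3cArcs (r := r) (q := q) C (Sum.inl s, c) (Sum.inl s', c') ↔ c ≠ c' := Iff.rfl
lemma arcs_XX' (i j : Fin m) (p : Fin r) (p' : Fin r) (c c' : Bool) :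
    x3cArcs (q := q) C (Sum.inr (Sum.inl (i, p)), c) (Sum.inr (Sum.inl (j, p')), c') ↔
      i = j ∧ c ≠ c' := Iff.rfl
lemma arcs_YY' (i j : Fin m) (p p' : Fin q) (c c' : Bool) :
    x3cArcs (r := r) C (Sum.inr (Sum.inr (i, p)), c) (Sum.inr (Sum.inr (j, p')), c') ↔
      i = j ∧ c ≠ c' := Iff.rfl
lemma arcs_XY' (i j : Fin m) (p : Fin r) (p' : Fin q) (c c' : Bool) :
    x3cArcs C (Sum.inr (Sum.inl (i, p)), c) (Sum.inr (Sum.inr (j, p')), c') ↔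
      i = j ∧ c ≠ c' := Iff.rfl
lemma arcs_XS' (i : Fin m) (p : Fin r) (s : S) (c c' : Bool) :
    x3cArcs (q := q) C (Sum.inr (Sum.inl (i, p)), c) (Sum.inl s, c') ↔
      s ∈ C i ∧ c ≠ c' := Iff.rfl
lemma arcs_SX' (s : S) (i : Fin m) (p : Fin r) (c c' : Bool) :
    x3cArcs (q := q) C (Sum.inl s, c) (Sum.inr (Sum.inl (i, p)), c') ↔ False := Iff.rfl
lemma arcs_SY' (s : S) (i : Fin m) (p : Fin q) (c c' : Bool) :
    x3cArcs (r := r) C (Sum.inl s, c) (Sum.inr (Sum.inr (i, p)), c') ↔ False := Iff.rfl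
lemma arcs_YX' (i j : Fin m) (p : Fin q) (p' : Fin r) (c c' : Bool) :
    x3cArcs C (Sum.inr (Sum.inr (i, p)), c) (Sum.inr (Sum.inl (j, p')), c') ↔ False := Iff.rfl
lemma arcs_YS' (i : Fin m) (p : Fin q) (s : S) (c c' : Bool) :
    x3cArcs (r := r) C (Sum.inr (Sum.inr (i, p)), c) (Sum.inl s, c') ↔ False := Iff.rfl

instance x3cArcsDec (u v : X3CVert S m r q) : Decidable (x3cArcs C u v) :=
  match u, v with
  | (Sum.inl _, c), (Sum.inl _, c') => inferInstanceAs (Decidable (c ≠ c'))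
  | (Sum.inr (Sum.inl (i, _)), c), (Sum.inr (Sum.inl (j, _)), c') =>
      inferInstanceAs (Decidable (i = j ∧ c ≠ c'))
  | (Sum.inr (Sum.inr (i, _)), c), (Sum.inr (Sum.inr (j, _)), c') =>
      inferInstanceAs (Decidable (i = j ∧ c ≠ c'))
  | (Sum.inr (Sum.inl (i, _)), c), (Sum.inr (Sum.inr (j, _)), c') =>
      inferInstanceAs (Decidable (i = j ∧ c ≠ c'))
  | (Sum.inr (Sum.inl (i, _)), c), (Sum.inl s, c') =>
      inferInstanceAs (Decidable (s ∈ C i ∧ c ≠ c'))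
  | (Sum.inl _, _), (Sum.inr (Sum.inl _), _) => inferInstanceAs (Decidable False)
  | (Sum.inl _, _), (Sum.inr (Sum.inr _), _) => inferInstanceAs (Decidable False)
  | (Sum.inr (Sum.inr _), _), (Sum.inl _, _) => inferInstanceAs (Decidable False)
  | (Sum.inr (Sum.inr _), _), (Sum.inr (Sum.inl _), _) => inferInstanceAs (Decidable False)

end Vert
section Ball

variable {W : Type}

/-- If every vertex `x` has a minimal cluster `K x` that contains `x` and a
vertex of the opposite color, then the BMG of the tree sends `x` to exactly
the opposite-colored vertices of `K x`. -/
lemma explains_of_balls (T : PhyloTree W) (σ : W → Bool) (G : W → W → Prop)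
    (K : W → Set W)
    (hmem : ∀ x, K x ∈ T.clusters)
    (hx : ∀ x, x ∈ K x)
    (hwit : ∀ x, ∃ z ∈ K x, σ z = !σ x)
    (hmin : ∀ x p, p ∈ T.clusters → x ∈ p → (∃ z ∈ p, σ z ≠ σ x) → K x ⊆ p)
    (hGiff : ∀ x y, G x y ↔ (σ y = !σ x ∧ y ∈ K x)) :
    Explains T σ G := by
  intro x y
  rw [hGiff]
  constructor
  · rintro ⟨hc, hy⟩
    refine ⟨by rw [hc]; cases σ x <;> simp, fun y' hy' => ?_⟩
    have h1 : T.lcaSet x y ⊆ K x := T.lcaSet_subset (hmem x) (hx x) hy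
    have h2 : K x ⊆ T.lcaSet x y' := by
      refine Set.subset_sInter fun p hp => ?_
      exact hmin x p hp.1 hp.2.1 ⟨y', hp.2.2, by rw [hy', hc]; cases σ x <;> simp⟩
    exact h1.trans h2
  · rintro ⟨hne, hall⟩
    have hc : σ y = !σ x := by cases hxx : σ x <;> cases hyy : σ y <;> simp_all
    refine ⟨hc, ?_⟩
    obtain ⟨z, hzK, hzc⟩ := hwit x
    have h1 : T.lcaSet x y ⊆ T.lcaSet x z := hall z (by rw [hzc, hc])
    have h2 : T.lcaSet x z ⊆ K x := T.lcaSet_subset (hmem x) (hx x) hzK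
    exact h2 (h1 (T.mem_lcaSet_right x y))

end Ball
section FwdTree

variable {S : Type} [DecidableEq S] {m r q : ℕ}

/-- clusters of the tree explaining the edited graph -/
def fwdClusters (f : S → Fin m) : Set (Set (X3CVert S m r q)) :=
  {p | (∃ v, p = {v}) ∨ p = Set.univ ∨ (∃ i, p = {v | idx f v = i}) ∨
    (∃ i, p = {v | idx f v = i ∧ srt v = 2}) ∨
    (∃ s₀ : S, p = {v | idx f v = f s₀ ∧ srt v = 0})}

/-- the tree explaining the edited graph -/
def fwdTree (f : S → Fin m) (hm0 : 0 < m) (hr0 : 0 < r) (hq0 : 0 < q) :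
    PhyloTree (X3CVert S m r q) where
  clusters := fwdClusters f
  singleton_mem := fun v => Or.inl ⟨v, rfl⟩
  univ_mem := Or.inr (Or.inl rfl)
  nonempty_mem := by
    rintro p (⟨v, rfl⟩ | rfl | ⟨i, rfl⟩ | ⟨i, rfl⟩ | ⟨s₀, rfl⟩)
    · exact ⟨v, rfl⟩
    · exact ⟨XV ⟨0, hm0⟩ ⟨0, hr0⟩ true, trivial⟩
    · exact ⟨XV i ⟨0, hr0⟩ true, rfl⟩
    · exact ⟨YV i ⟨0, hq0⟩ true, ⟨rfl, rfl⟩⟩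
    · exact ⟨SB s₀ true, ⟨rfl, rfl⟩⟩
  compat := by
    have hsingL : ∀ (v : X3CVert S m r q) (A : Set (X3CVert S m r q)),
        {v} ⊆ A ∨ A ⊆ {v} ∨ {v} ∩ A = ∅ := by
      intro v A
      by_cases h : v ∈ A
      · exact Or.inl (by simpa using h)
      · refine Or.inr (Or.inr ?_)
        ext w; simp only [Set.mem_inter_iff, Set.mem_singleton_iff,
          Set.mem_empty_iff_false, iff_false, not_and]
        rintro rfl; exact h
    have hsingR : ∀ (v : X3CVert S m r q) (A : Set (X3CVert S m r q)),
        A ⊆ {v} ∨ {v} ⊆ A ∨ A ∩ {v} = ∅ := by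
      intro v A
      rcases hsingL v A with h | h | h
      · exact Or.inr (Or.inl h)
      · exact Or.inl h
      · exact Or.inr (Or.inr (by rw [Set.inter_comm]; exact h))
    have hdisj : ∀ {A B : Set (X3CVert S m r q)},
        (∀ v, v ∈ A → v ∈ B → False) → A ∩ B = ∅ := by
      intro A B h; ext w
      simp only [Set.mem_inter_iff, Set.mem_empty_iff_false, iff_false, not_and]
      exact fun h1 h2 => h w h1 h2
    rintro p (⟨v, rfl⟩ | rfl | ⟨i, rfl⟩ | ⟨i, rfl⟩ | ⟨s₀, rfl⟩) p'
        (⟨v', rfl⟩ | rfl | ⟨j, rfl⟩ | ⟨j, rfl⟩ | ⟨s₁, rfl⟩)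
    -- p singleton
    · exact hsingL v _
    · exact hsingL v _
    · exact hsingL v _
    · exact hsingL v _
    · exact hsingL v _
    -- p univ
    · exact Or.inr (Or.inl (Set.subset_univ _))
    · exact Or.inl (le_refl _)
    · exact Or.inr (Or.inl (Set.subset_univ _))
    · exact Or.inr (Or.inl (Set.subset_univ _))
    · exact Or.inr (Or.inl (Set.subset_univ _))
    -- p = B i
    · exact hsingR v' _
    · exact Or.inl (Set.subset_univ _)
    · by_cases h : i = j
      · subst h; exact Or.inl (le_refl _)
      · exact Or.inr (Or.inr (hdisj fun v h1 h2 => h (h1.symm.trans h2)))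
    · by_cases h : i = j
      · subst h; exact Or.inr (Or.inl fun v hv => hv.1)
      · exact Or.inr (Or.inr (hdisj fun v h1 h2 => h (h1.symm.trans h2.1)))
    · by_cases h : i = f s₁
      · subst h; exact Or.inr (Or.inl fun v hv => hv.1)
      · exact Or.inr (Or.inr (hdisj fun v h1 h2 => h (h1.symm.trans h2.1)))
    -- p = Y i
    · exact hsingR v' _
    · exact Or.inl (Set.subset_univ _)
    · by_cases h : i = j
      · subst h; exact Or.inl fun v hv => hv.1
      · exact Or.inr (Or.inr (hdisj fun v h1 h2 => h (h1.1.symm.trans h2)))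
    · by_cases h : i = j
      · subst h; exact Or.inl (le_refl _)
      · exact Or.inr (Or.inr (hdisj fun v h1 h2 => h (h1.1.symm.trans h2.1)))
    · exact Or.inr (Or.inr (hdisj fun v h1 h2 =>
        absurd (h1.2.symm.trans h2.2) (by norm_num)))
    -- p = S6 s₀
    · exact hsingR v' _
    · exact Or.inl (Set.subset_univ _)
    · by_cases h : f s₀ = j
      · subst h; exact Or.inl fun v hv => hv.1
      · exact Or.inr (Or.inr (hdisj fun v h1 h2 => h (h1.1.symm.trans h2)))
    · exact Or.inr (Or.inr (hdisj fun v h1 h2 =>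
        absurd (h1.2.symm.trans h2.2) (by norm_num)))
    · by_cases h : f s₀ = f s₁
      · rw [h]; exact Or.inl (le_refl _)
      · exact Or.inr (Or.inr (hdisj fun v h1 h2 => h (h1.1.symm.trans h2.1)))

/-- the BMG property, for any graph of the right pattern -/
lemma isBMG_of_pattern (f : S → Fin m) (hm0 : 0 < m) (hr0 : 0 < r) (hq0 : 0 < q)
    (G : X3CVert S m r q → X3CVert S m r q → Prop)
    (hGiff : ∀ u v, G u v ↔
      (v.2 = !u.2 ∧ idx f u = idx f v ∧ (srt u = 1 ∨ srt v = srt u))) :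
    IsBMG G (fun v => v.2) := by
  refine ⟨fwdTree f hm0 hr0 hq0, explains_of_balls _ _ _
    (fun x => {v | idx f v = idx f x ∧ (srt x = 1 ∨ srt v = srt x)})
    ?_ (fun x => ⟨rfl, Or.inr rfl⟩) ?_ ?_ (fun x y => by rw [hGiff]; simp only [Set.mem_setOf_eq]; tauto)⟩
  · -- K x ∈ clusters
    rintro ⟨(s | ⟨i, p⟩ | ⟨i, p⟩), c⟩
    · refine Or.inr (Or.inr (Or.inr (Or.inr ⟨s, ?_⟩)))
      ext v; simp only [Set.mem_setOf_eq, srt, idx]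
      simp
    · refine Or.inr (Or.inr (Or.inl ⟨i, ?_⟩))
      ext v; simp only [Set.mem_setOf_eq, srt, idx]
      simp
    · refine Or.inr (Or.inr (Or.inr (Or.inl ⟨i, ?_⟩)))
      ext v; simp only [Set.mem_setOf_eq, srt, idx]
      simp
  · -- witness of opposite color
    rintro ⟨(s | ⟨i, p⟩ | ⟨i, p⟩), c⟩
    · exact ⟨SB s !c, ⟨rfl, Or.inr rfl⟩, rfl⟩
    · exact ⟨XV i p !c, ⟨rfl, Or.inr rfl⟩, rfl⟩
    · exact ⟨YV i p !c, ⟨rfl, Or.inr rfl⟩, rfl⟩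
  · -- minimality
    rintro x p (⟨v, rfl⟩ | rfl | ⟨i, rfl⟩ | ⟨i, rfl⟩ | ⟨s₀, rfl⟩) hx hz
    · obtain ⟨z, hz1, hz2⟩ := hz
      rw [Set.mem_singleton_iff] at hx hz1
      subst hx; subst hz1; exact absurd rfl hz2
    · exact fun v _ => trivial
    · rw [Set.mem_setOf_eq] at hx
      exact fun v hv => by rw [Set.mem_setOf_eq, hv.1, hx]
    · rw [Set.mem_setOf_eq] at hx
      intro v hv
      rcases hv.2 with h1 | h1
      · rw [h1] at hx; exact absurd hx.2 (by norm_num)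
      · exact ⟨hv.1.trans hx.1, h1.trans hx.2⟩
    · rw [Set.mem_setOf_eq] at hx
      intro v hv
      rcases hv.2 with h1 | h1
      · rw [h1] at hx; exact absurd hx.2 (by norm_num)
      · exact ⟨hv.1.trans hx.1, h1.trans hx.2⟩

end FwdTree
section Forward

open Finset

variable {S : Type} [Fintype S] [DecidableEq S] {m r q : ℕ}
  (C : Fin m → Finset S) (f : S → Fin m)

instance instDeqV : DecidableEq (X3CVert S m r q × X3CVert S m r q) :=
  instDecidableEqProd

lemma bool_opp {c c' : Bool} (h : c ≠ c') : c' = !c := by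
  cases c <;> cases c' <;> simp_all

lemma bool_ne {c c' : Bool} (h : c' = !c) : c ≠ c' := by
  cases c <;> cases c' <;> simp_all

lemma arcs_irrefl (v : X3CVert S m r q) : ¬ x3cArcs C v v := by
  rcases v with ⟨(s | ⟨i, p⟩ | ⟨i, p⟩), c⟩
  · exact fun h => (arcs_SS C s s c c).1 h rfl
  · exact fun h => ((arcs_XX C i i p p c c).1 h).2 rfl
  · exact fun h => ((arcs_YY C i i p p c c).1 h).2 rfl

/-- deleted arcs from `X_i` into the `S`-part, for `i` not in the cover -/
def fwdF1 : Finset (X3CVert S m r q × X3CVert S m r q) :=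
  (Finset.univ.filter fun z : (Fin m × S) × Fin r × Bool =>
      z.1.2 ∈ C z.1.1 ∧ f z.1.2 ≠ z.1.1).image
    fun z => (XV z.1.1 z.2.1 (!z.2.2), SB z.1.2 z.2.2)

/-- deleted arcs inside the `S`-part, between different cover classes -/
def fwdF2 : Finset (X3CVert S m r q × X3CVert S m r q) :=
  (Finset.univ.filter fun z : (S × S) × Bool => f z.1.1 ≠ f z.1.2).image
    fun z => (SB z.1.1 z.2, SB z.1.2 (!z.2))

/-- the edit set for the forward direction -/
def fwdF : Finset (X3CVert S m r q × X3CVert S m r q) := fwdF1 C f ∪ fwdF2 f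

lemma mem_fwdF1 {u v : X3CVert S m r q} :
    (u, v) ∈ fwdF1 C f ↔
      ∃ i p s c, s ∈ C i ∧ f s ≠ i ∧ u = XV i p (!c) ∧ v = SB s c := by
  simp only [fwdF1, Finset.mem_image, Finset.mem_filter,
    Finset.mem_univ, true_and, Prod.mk.injEq]
  constructor
  · rintro ⟨⟨⟨i, s⟩, ⟨p, c⟩⟩, ⟨h1, h2⟩, h3, h4⟩
    exact ⟨i, p, s, c, h1, h2, h3.symm, h4.symm⟩
  · rintro ⟨i, p, s, c, h1, h2, h3, h4⟩
    exact ⟨⟨⟨i, s⟩, ⟨p, c⟩⟩, ⟨h1, h2⟩, h3.symm, h4.symm⟩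

lemma mem_fwdF2 {u v : X3CVert S m r q} :
    (u, v) ∈ fwdF2 (m := m) (r := r) (q := q) f ↔
      ∃ s s' c, f s ≠ f s' ∧ u = SB s c ∧ v = SB s' (!c) := by
  simp only [fwdF2, Finset.mem_image, Finset.mem_filter,
    Finset.mem_univ, true_and, Prod.mk.injEq]
  constructor
  · rintro ⟨⟨⟨s, s'⟩, c⟩, h1, h3, h4⟩
    exact ⟨s, s', c, h1, h3.symm, h4.symm⟩
  · rintro ⟨s, s', c, h1, h3, h4⟩
    exact ⟨⟨⟨s, s'⟩, c⟩, h1, h3.symm, h4.symm⟩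

lemma fwdF_arcs (hfC : ∀ s, s ∈ C (f s)) :
    ∀ p ∈ (fwdF C f : Finset (X3CVert S m r q × X3CVert S m r q)),
      x3cArcs C p.1 p.2 := by
  rintro ⟨u, v⟩ hp
  rcases Finset.mem_union.1 hp with h | h
  · obtain ⟨i, p, s, c, h1, _, rfl, rfl⟩ := (mem_fwdF1 C f).1 h
    rw [arcs_XS]
    exact ⟨h1, by cases c <;> simp⟩
  · obtain ⟨s, s', c, _, rfl, rfl⟩ := (mem_fwdF2 f).1 h
    rw [arcs_SS]
    cases c <;> simp

/-- the description of the edited graph -/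
lemma fwdG_iff (hfC : ∀ s, s ∈ C (f s)) (hfU : ∀ s s', s' ∈ C (f s) → f s' = f s)
    (u v : X3CVert S m r q) :
    ((x3cArcs C u v ∧ (u, v) ∉ fwdF C f) ∨ (¬ x3cArcs C u v ∧ (u, v) ∈ fwdF C f)) ↔
      (v.2 = !u.2 ∧ idx f u = idx f v ∧ (srt u = 1 ∨ srt v = srt u)) := by
  have harc : (u, v) ∈ fwdF C f → x3cArcs C u v := fun h => fwdF_arcs C f hfC _ h
  have hiff : ((x3cArcs C u v ∧ (u, v) ∉ fwdF C f) ∨ (¬ x3cArcs C u v ∧ (u, v) ∈ fwdF C f))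
      ↔ (x3cArcs C u v ∧ (u, v) ∉ fwdF C f) := by tauto
  rw [hiff]
  have hmem : (u, v) ∈ fwdF C f ↔ (u, v) ∈ fwdF1 C f ∨ (u, v) ∈ fwdF2 f :=
    Finset.mem_union
  rcases u with ⟨(s | ⟨i, p⟩ | ⟨i, p⟩), c⟩ <;> rcases v with ⟨(s' | ⟨j, p'⟩ | ⟨j, p'⟩), c'⟩
  · -- S S
    rw [arcs_SS', hmem, mem_fwdF1, mem_fwdF2]
    simp only [SB, XV, idx, srt, Prod.mk.injEq, Sum.inl.injEq, reduceCtorEq,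
      false_and, and_false, exists_false, false_or, or_false]
    constructor
    · rintro ⟨h1, h2⟩
      have hcc : c' = !c := bool_opp h1
      refine ⟨hcc, ?_, trivial⟩
      by_contra hne
      exact h2 ⟨s, s', c, hne, ⟨rfl, rfl⟩, rfl, hcc⟩
    · rintro ⟨h1, h2, -⟩
      refine ⟨bool_ne h1, ?_⟩
      rintro ⟨s1, s1', c1, hne, ⟨rfl, rfl⟩, rfl, -⟩
      exact hne h2
  · rw [arcs_SX']; simp [srt]
  · rw [arcs_SY']; simp [srt]
  · -- X S
    rw [arcs_XS', hmem, mem_fwdF1, mem_fwdF2]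
    simp only [SB, XV, idx, srt, Prod.mk.injEq, Sum.inl.injEq, Sum.inr.injEq,
      reduceCtorEq, false_and, and_false, exists_false, or_false]
    constructor
    · rintro ⟨⟨h1, h2⟩, h3⟩
      have hcc : c' = !c := bool_opp h2
      refine ⟨hcc, ?_, trivial⟩
      by_contra hne
      exact h3 ⟨i, p, s', c', h1, fun he => hne he.symm,
        ⟨⟨rfl, rfl⟩, bool_opp h2.symm⟩, rfl, rfl⟩
    · rintro ⟨h1, h2, -⟩
      have hs : s' ∈ C i := by rw [h2]; exact hfC s'
      refine ⟨⟨hs, bool_ne h1⟩, ?_⟩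
      rintro ⟨i1, p1, s0, c1, hc0, hne, ⟨⟨hi1, -⟩, -⟩, hs0, -⟩
      subst hi1; subst hs0
      exact hne h2.symm
  · -- X X
    rw [arcs_XX', hmem, mem_fwdF1, mem_fwdF2]
    simp only [SB, XV, idx, srt, Prod.mk.injEq, Sum.inl.injEq, Sum.inr.injEq,
      reduceCtorEq, false_and, and_false, exists_false, or_false, not_false_iff,
      and_true]
    constructor
    · rintro ⟨h1, h2⟩
      exact ⟨bool_opp h2, h1, Or.inl trivial⟩
    · rintro ⟨h1, h2, -⟩
      exact ⟨h2, bool_ne h1⟩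
  · -- X Y
    rw [arcs_XY', hmem, mem_fwdF1, mem_fwdF2]
    simp only [SB, XV, YV, idx, srt, Prod.mk.injEq, Sum.inl.injEq, Sum.inr.injEq,
      reduceCtorEq, false_and, and_false, exists_false, or_false, not_false_iff,
      and_true]
    constructor
    · rintro ⟨h1, h2⟩
      exact ⟨bool_opp h2, h1, Or.inl trivial⟩
    · rintro ⟨h1, h2, -⟩
      exact ⟨h2, bool_ne h1⟩
  · rw [arcs_YS']; simp [srt]
  · rw [arcs_YX']; simp [srt]
  · -- Y Y
    rw [arcs_YY', hmem, mem_fwdF1, mem_fwdF2]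
    simp only [SB, XV, YV, idx, srt, Prod.mk.injEq, Sum.inl.injEq, Sum.inr.injEq,
      reduceCtorEq, false_and, and_false, exists_false, or_false, not_false_iff,
      and_true]
    constructor
    · rintro ⟨h1, h2⟩
      exact ⟨bool_opp h2, h1, Or.inr trivial⟩
    · rintro ⟨h1, h2, -⟩
      exact ⟨h2, bool_ne h1⟩

end Forward
section FwdCard

open Finset

variable {S : Type} [Fintype S] [DecidableEq S] {t m r q k : ℕ}
  (C : Fin m → Finset S) (f : S → Fin m)

lemma fwdF1_card (hS : Fintype.card S = 3 * t) (hC3 : ∀ i, (C i).card = 3)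
    (hfC : ∀ s, s ∈ C (f s)) :
    (fwdF1 C f : Finset (X3CVert S m r q × X3CVert S m r q)).card ≤
      (3 * m - 3 * t) * (r * 2) := by
  refine le_trans (Finset.card_image_le) ?_
  have hsplit : (Finset.univ.filter fun z : (Fin m × S) × Fin r × Bool =>
      z.1.2 ∈ C z.1.1 ∧ f z.1.2 ≠ z.1.1) =
      (Finset.univ.filter fun is : Fin m × S => is.2 ∈ C is.1 ∧ f is.2 ≠ is.1) ×ˢ
        (Finset.univ : Finset (Fin r × Bool)) := by
    ext ⟨⟨i, s⟩, ⟨p, c⟩⟩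
    simp [Finset.mem_product]
  rw [hsplit, Finset.card_product]
  have hcard2 : (Finset.univ : Finset (Fin r × Bool)).card = r * 2 := by
    simp [Fintype.card_prod]
  rw [hcard2]
  have hfil : (Finset.univ.filter fun is : Fin m × S => is.2 ∈ C is.1 ∧ f is.2 ≠ is.1) =
      (Finset.univ.filter fun is : Fin m × S => is.2 ∈ C is.1).filter
        fun is => ¬ f is.2 = is.1 := by
    rw [Finset.filter_filter]
  have hall : (Finset.univ.filter fun is : Fin m × S => is.2 ∈ C is.1) =
      Finset.univ.biUnion fun i : Fin m => ({i} : Finset (Fin m)) ×ˢ C i := by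
    ext ⟨i, s⟩
    simp [Finset.mem_product, Finset.mem_biUnion]
  have hallcard : (Finset.univ.filter fun is : Fin m × S => is.2 ∈ C is.1).card = 3 * m := by
    rw [hall, Finset.card_biUnion]
    · have : ∀ i : Fin m, (({i} : Finset (Fin m)) ×ˢ C i).card = 3 := by
        intro i; rw [Finset.card_product, Finset.card_singleton, one_mul, hC3]
      rw [Finset.sum_congr rfl fun i _ => this i, Finset.sum_const, Finset.card_univ,
        Fintype.card_fin, smul_eq_mul]
      omega
    · intro i _ j _ hij
      simp only [Function.onFun]
      rw [Finset.disjoint_left]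
      rintro ⟨a, b⟩ ha hb
      rw [Finset.mem_product, Finset.mem_singleton] at ha hb
      exact hij (ha.1.symm.trans hb.1)
  have hgood : (Finset.univ.image fun s : S => ((f s, s) : Fin m × S)) ⊆
      (Finset.univ.filter fun is : Fin m × S => is.2 ∈ C is.1).filter
        fun is => f is.2 = is.1 := by
    intro z hz
    obtain ⟨s, _, rfl⟩ := Finset.mem_image.1 hz
    exact Finset.mem_filter.2 ⟨Finset.mem_filter.2 ⟨Finset.mem_univ _, hfC s⟩, rfl⟩
  have hgoodcard : (Finset.univ.image fun s : S => ((f s, s) : Fin m × S)).card = 3 * t := by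
    rw [Finset.card_image_of_injective _ (fun s s' h => congrArg Prod.snd h),
      Finset.card_univ, hS]
  have hpart := Finset.card_filter_add_card_filter_not
    (s := Finset.univ.filter fun is : Fin m × S => is.2 ∈ C is.1)
    (p := fun is => f is.2 = is.1)
  have hge : 3 * t ≤ ((Finset.univ.filter fun is : Fin m × S => is.2 ∈ C is.1).filter
      fun is => f is.2 = is.1).card := by
    rw [← hgoodcard]; exact Finset.card_le_card hgood
  rw [hfil]
  have : ((Finset.univ.filter fun is : Fin m × S => is.2 ∈ C is.1).filter
      fun is => ¬ f is.2 = is.1).card ≤ 3 * m - 3 * t := by omega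
  exact Nat.mul_le_mul_right _ this

lemma fwdF2_card (hS : Fintype.card S = 3 * t) (hC3 : ∀ i, (C i).card = 3)
    (hfC : ∀ s, s ∈ C (f s)) (hfU : ∀ s s', s' ∈ C (f s) → f s' = f s) :
    (fwdF2 f : Finset (X3CVert S m r q × X3CVert S m r q)).card ≤
      (9 * (t * t) - 9 * t) * 2 := by
  refine le_trans (Finset.card_image_le) ?_
  have hsplit : (Finset.univ.filter fun z : (S × S) × Bool => f z.1.1 ≠ f z.1.2) =
      (Finset.univ.filter fun ss : S × S => ¬ f ss.1 = f ss.2) ×ˢ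
        (Finset.univ : Finset Bool) := by
    ext ⟨⟨s, s'⟩, c⟩
    simp [Finset.mem_product]
  rw [hsplit, Finset.card_product]
  have hcard2 : (Finset.univ : Finset Bool).card = 2 := by simp
  rw [hcard2]
  have hbig : (Finset.univ.biUnion fun s : S => ({s} : Finset S) ×ˢ C (f s)) ⊆
      Finset.univ.filter fun ss : S × S => f ss.1 = f ss.2 := by
    intro z hz
    rw [Finset.mem_biUnion] at hz
    obtain ⟨s, _, hz⟩ := hz
    rw [Finset.mem_product, Finset.mem_singleton] at hz
    obtain ⟨h1, h2⟩ := hz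
    simp only [Finset.mem_filter, Finset.mem_univ, true_and]
    rw [h1]
    exact (hfU s z.2 h2).symm
  have hbigcard : (Finset.univ.biUnion fun s : S => ({s} : Finset S) ×ˢ C (f s)).card
      = 9 * t := by
    rw [Finset.card_biUnion]
    · have : ∀ s : S, (({s} : Finset S) ×ˢ C (f s)).card = 3 := by
        intro s; rw [Finset.card_product, Finset.card_singleton, one_mul, hC3]
      rw [Finset.sum_congr rfl fun s _ => this s, Finset.sum_const, Finset.card_univ,
        hS, smul_eq_mul]
      omega
    · intro s _ s' _ hss
      simp only [Function.onFun]
      rw [Finset.disjoint_left]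
      rintro ⟨a, b⟩ ha hb
      rw [Finset.mem_product, Finset.mem_singleton] at ha hb
      exact hss (ha.1.symm.trans hb.1)
  have huniv : (Finset.univ : Finset (S × S)).card = 9 * (t * t) := by
    rw [Finset.card_univ, Fintype.card_prod, hS]
    ring
  have hpart := Finset.card_filter_add_card_filter_not
    (s := (Finset.univ : Finset (S × S)))
    (p := fun ss : S × S => f ss.1 = f ss.2)
  have hge : 9 * t ≤ ((Finset.univ : Finset (S × S)).filter
      fun ss => f ss.1 = f ss.2).card := by
    rw [← hbigcard]; exact Finset.card_le_card hbig
  have h99 : 9 * t ≤ 9 * (t * t) := by nlinarith [Nat.zero_le t]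
  have : ((Finset.univ : Finset (S × S)).filter fun ss => ¬ f ss.1 = f ss.2).card ≤
      9 * (t * t) - 9 * t := by omega
  exact Nat.mul_le_mul_right _ this

end FwdCard
section FwdMain

open Finset

variable {S : Type} [Fintype S] [DecidableEq S] {t m r q k : ℕ}
  (C : Fin m → Finset S) (f : S → Fin m)

lemma forward_main (hm : t < m) (hS : Fintype.card S = 3 * t)
    (hC3 : ∀ i, (C i).card = 3) (hr : r = 18 * t ^ 2)
    (hq : q = 3 * (6 * r * (m - t) + r - 18 * t))
    (hk : k = 6 * r * (m - t) + r - 18 * t)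
    (hfC : ∀ s, s ∈ C (f s)) (hfU : ∀ s s', s' ∈ C (f s) → f s' = f s) :
    ∃ F : Finset (X3CVert S m r q × X3CVert S m r q),
      (∀ p ∈ F, x3cArcs C p.1 p.2) ∧ F.card ≤ k ∧
      IsBMG
        (fun u v => (x3cArcs C u v ∧ (u, v) ∉ F) ∨ (¬ x3cArcs C u v ∧ (u, v) ∈ F))
        (fun v : X3CVert S m r q => v.2) := by
  have ht1 : 1 ≤ t := by
    have h1 := Finset.card_le_univ (C ⟨0, by omega⟩)
    rw [hS, hC3] at h1
    omega
  have htt : t ≤ t * t := Nat.le_mul_of_pos_left t (by omega)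
  have hrtt : r = 18 * (t * t) := by rw [hr]; ring
  have hr18 : 18 * t ≤ r := by omega
  have hr0 : 0 < r := by omega
  have hd1 : 1 ≤ m - t := by omega
  have hB0 : 0 < 6 * r * (m - t) :=
    Nat.mul_pos (by omega) (by omega)
  have hq0 : 0 < q := by
    rw [hq]
    generalize 6 * r * (m - t) = B at hB0 ⊢
    omega
  refine ⟨fwdF C f, fwdF_arcs C f hfC, ?_, ?_⟩
  · -- cardinality
    refine le_trans (Finset.card_union_le _ _) ?_
    have h1 := fwdF1_card (t := t) (r := r) (q := q) C f hS hC3 hfC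
    have h2 := fwdF2_card (t := t) (m := m) (r := r) (q := q) C f hS hC3 hfC hfU
    have harith : (3 * m - 3 * t) * (r * 2) + (9 * (t * t) - 9 * t) * 2 ≤ k := by
      have e1 : (3 * m - 3 * t) = 3 * (m - t) := by omega
      have e2 : 3 * (m - t) * (r * 2) = 6 * r * (m - t) := by ring
      have e3 : (9 * (t * t) - 9 * t) * 2 = 18 * (t * t) - 18 * t := by omega
      rw [e1, e2, e3, hk]
      omega
    omega
  · exact isBMG_of_pattern f (by omega) hr0 hq0 _ (fun u v => fwdG_iff C f hfC hfU u v)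

end FwdMain
section Backward

open Finset

variable {S : Type} [Fintype S] [DecidableEq S] {t m r q k : ℕ}
  {C : Fin m → Finset S} {F : Finset (X3CVert S m r q × X3CVert S m r q)}
  {T : PhyloTree (X3CVert S m r q)}

/-- the edited graph -/
def Gp (C : Fin m → Finset S) (F : Finset (X3CVert S m r q × X3CVert S m r q)) :
    X3CVert S m r q → X3CVert S m r q → Prop :=
  fun u v => (x3cArcs C u v ∧ (u, v) ∉ F) ∨ (¬ x3cArcs C u v ∧ (u, v) ∈ F)

lemma bool_self_ne (c : Bool) : c ≠ !c := by cases c <;> simp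

instance GpDec (u v : X3CVert S m r q) : Decidable (Gp C F u v) := by
  unfold Gp; infer_instance

lemma Gp_memF {u v : X3CVert S m r q} (h : ¬ x3cArcs C u v) (hG : Gp C F u v) :
    (u, v) ∈ F := by
  rcases hG with ⟨h1, _⟩ | ⟨_, h2⟩
  · exact absurd h1 h
  · exact h2

lemma Gp_del {u v : X3CVert S m r q} (h : x3cArcs C u v) (hG : ¬ Gp C F u v) :
    (u, v) ∈ F := by
  by_cases hf : (u, v) ∈ F
  · exact hf
  · exact absurd (Or.inl ⟨h, hf⟩) hG

lemma Gp_of_arc {u v : X3CVert S m r q} (h : x3cArcs C u v) (hF : (u, v) ∉ F) :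
    Gp C F u v := Or.inl ⟨h, hF⟩

lemma cardF_big (hFc : F.card ≤ k) (hk0 : 0 < k) (hq3 : q = 3 * k)
    (g : Fin q → X3CVert S m r q × X3CVert S m r q)
    (hg : ∀ j, g j ∈ F) (hinj : Function.Injective g) : False := by
  have h1 : (Finset.univ : Finset (Fin q)).card ≤ F.card :=
    Finset.card_le_card_of_injOn g (fun x _ => hg x) hinj.injOn
  rw [Finset.card_univ, Fintype.card_fin] at h1
  omega

/-- Claim: all `X`-in-neighbours of a vertex come from a single bi-clique. -/
lemma same_index (hT : Explains T (fun v : X3CVert S m r q => v.2) (Gp C F))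
    (hFc : F.card ≤ k) (hk0 : 0 < k) (hq3 : q = 3 * k)
    {i j : Fin m} {p p' : Fin r} {cx cu : Bool} {v : X3CVert S m r q}
    (h1 : Gp C F (XV i p cx) v) (h2 : Gp C F (XV j p' cu) v) : i = j := by
  classical
  by_contra hne
  have core : ∀ (i j : Fin m) (p p' : Fin r) (cx cu : Bool), i ≠ j →
      (∀ y, Gp C F (XV i p cx) y → Gp C F (XV j p' cu) y) → False := by
    intro i j p p' cx cu hne hdom
    refine cardF_big hFc hk0 hq3 (fun pp =>
      if Gp C F (XV i p cx) (YV i pp (!cx))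
      then ((XV j p' cu : X3CVert S m r q), (YV i pp (!cx) : X3CVert S m r q))
      else (XV i p cx, YV i pp (!cx))) ?_ ?_
    · intro pp
      by_cases h : Gp C F (XV i p cx) (YV i pp (!cx))
      · rw [if_pos h]
        refine Gp_memF ?_ (hdom _ h)
        rw [arcs_XY]
        rintro ⟨rfl, -⟩
        exact hne rfl
      · rw [if_neg h]
        exact Gp_del ((arcs_XY C i i p pp cx (!cx)).2 ⟨rfl, bool_self_ne cx⟩) h
    · intro pp pp' he
      have hsnd : ∀ pp'' : Fin q,
          ((if Gp C F (XV i p cx) (YV i pp'' (!cx))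
          then ((XV j p' cu : X3CVert S m r q), (YV i pp'' (!cx) : X3CVert S m r q))
          else (XV i p cx, YV i pp'' (!cx))).2) = YV i pp'' (!cx) := by
        intro pp''
        by_cases h : Gp C F (XV i p cx) (YV i pp'' (!cx)) <;> simp [h]
      have h2 := congrArg Prod.snd he
      rw [hsnd pp, hsnd pp'] at h2
      simpa [YV] using h2
  rcases conf hT h1 h2 with hdom | hdom
  · exact core i j p p' cx cu hne hdom
  · exact core j i p' p cu cx (Ne.symm hne) hdom

end Backward
section Backward2

open Finset

variable {S : Type} [Fintype S] [DecidableEq S] {t m r q k : ℕ}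
  {C : Fin m → Finset S} {F : Finset (X3CVert S m r q × X3CVert S m r q)}
  {T : PhyloTree (X3CVert S m r q)}

/-- surviving original arcs into the slot `(s,c)` -/
def sv (C : Fin m → Finset S) (F : Finset (X3CVert S m r q × X3CVert S m r q))
    (s : S) (c : Bool) : Finset (Fin m × Fin r) :=
  Finset.univ.filter fun ip =>
    s ∈ C ip.1 ∧ ((XV ip.1 ip.2 (!c) : X3CVert S m r q), (SB s c : X3CVert S m r q)) ∉ F

lemma sv_G {s : S} {c : Bool} {ip : Fin m × Fin r} (h : ip ∈ sv C F s c) :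
    Gp C F (XV ip.1 ip.2 (!c)) (SB s c) := by
  rw [sv, Finset.mem_filter] at h
  exact Gp_of_arc ((arcs_XS C ip.1 ip.2 s (!c) c).2 ⟨h.2.1, by cases c <;> simp⟩) h.2.2

lemma sv_C {s : S} {c : Bool} {ip : Fin m × Fin r} (h : ip ∈ sv C F s c) :
    s ∈ C ip.1 := (Finset.mem_filter.1 h).2.1

lemma sv_index (hT : Explains T (fun v : X3CVert S m r q => v.2) (Gp C F))
    (hFc : F.card ≤ k) (hk0 : 0 < k) (hq3 : q = 3 * k)
    {s : S} {c : Bool} {ip ip' : Fin m × Fin r}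
    (h : ip ∈ sv C F s c) (h' : ip' ∈ sv C F s c) : ip.1 = ip'.1 :=
  same_index hT hFc hk0 hq3 (sv_G h) (sv_G h')

lemma sv_card (hT : Explains T (fun v : X3CVert S m r q => v.2) (Gp C F))
    (hFc : F.card ≤ k) (hk0 : 0 < k) (hq3 : q = 3 * k) (s : S) (c : Bool) :
    (sv C F s c).card ≤ r := by
  have h1 : (sv C F s c).card ≤ (Finset.univ : Finset (Fin r)).card := by
    refine Finset.card_le_card_of_injOn (fun ip => ip.2) (fun x _ => Finset.mem_univ _) ?_
    intro ip hip ip' hip' he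
    exact Prod.ext (sv_index hT hFc hk0 hq3 hip hip') he
  simpa using h1

/-- sort signature of an arc -/
def sig : X3CVert S m r q × X3CVert S m r q → ℕ × ℕ := fun pr => (srt pr.1, srt pr.2)

/-- all original `X → S` arcs -/
def origXS (C : Fin m → Finset S) : Finset (X3CVert S m r q × X3CVert S m r q) :=
  (Finset.univ.filter fun z : (Fin m × S) × Fin r × Bool => z.1.2 ∈ C z.1.1).image
    fun z => (XV z.1.1 z.2.1 (!z.2.2), SB z.1.2 z.2.2)

lemma origXS_card (hC3 : ∀ i, (C i).card = 3) :
    (origXS C : Finset (X3CVert S m r q × X3CVert S m r q)).card = 3 * m * (r * 2) := by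
  rw [origXS, Finset.card_image_of_injective]
  · have hsplit : (Finset.univ.filter fun z : (Fin m × S) × Fin r × Bool =>
        z.1.2 ∈ C z.1.1) =
        (Finset.univ.filter fun is : Fin m × S => is.2 ∈ C is.1) ×ˢ
          (Finset.univ : Finset (Fin r × Bool)) := by
      ext ⟨⟨i, s⟩, ⟨p, c⟩⟩
      simp [Finset.mem_product]
    rw [hsplit, Finset.card_product]
    have hcard2 : (Finset.univ : Finset (Fin r × Bool)).card = r * 2 := by
      simp [Fintype.card_prod]
    rw [hcard2]
    have hall : (Finset.univ.filter fun is : Fin m × S => is.2 ∈ C is.1) =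
        Finset.univ.biUnion fun i : Fin m => ({i} : Finset (Fin m)) ×ˢ C i := by
      ext ⟨i, s⟩
      simp [Finset.mem_product, Finset.mem_biUnion]
    rw [hall, Finset.card_biUnion]
    · have h3 : ∀ i : Fin m, (({i} : Finset (Fin m)) ×ˢ C i).card = 3 := by
        intro i; rw [Finset.card_product, Finset.card_singleton, one_mul, hC3]
      rw [Finset.sum_congr rfl fun i _ => h3 i, Finset.sum_const, Finset.card_univ,
        Fintype.card_fin, smul_eq_mul]
      ring
    · intro i _ j _ hij
      simp only [Function.onFun]
      rw [Finset.disjoint_left]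
      rintro ⟨a, b⟩ ha hb
      rw [Finset.mem_product, Finset.mem_singleton] at ha hb
      exact hij (ha.1.symm.trans hb.1)
  · rintro ⟨⟨i, s⟩, ⟨p, c⟩⟩ ⟨⟨i', s'⟩, ⟨p', c'⟩⟩ he
    simp only [XV, SB, Prod.mk.injEq, Sum.inr.injEq, Sum.inl.injEq] at he
    simp_all

/-- the surviving arcs, grouped by slots -/
def svArcs (C : Fin m → Finset S) (F : Finset (X3CVert S m r q × X3CVert S m r q)) :
    Finset (X3CVert S m r q × X3CVert S m r q) :=
  (Finset.univ : Finset (S × Bool)).biUnion fun sc =>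
    (sv C F sc.1 sc.2).image fun ip =>
      ((XV ip.1 ip.2 (!sc.2) : X3CVert S m r q), (SB sc.1 sc.2 : X3CVert S m r q))

lemma svArcs_card :
    (svArcs C F).card ≤ ∑ sc : S × Bool, (sv C F sc.1 sc.2).card := by
  refine le_trans (Finset.card_biUnion_le) ?_
  exact Finset.sum_le_sum fun sc _ => Finset.card_image_le

lemma origXS_sub :
    (origXS C : Finset (X3CVert S m r q × X3CVert S m r q)) ⊆
      svArcs C F ∪ F.filter fun pr => sig pr = (1, 0) := by
  intro pr hpr
  rw [origXS, Finset.mem_image] at hpr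
  obtain ⟨⟨⟨i, s⟩, ⟨p, c⟩⟩, hz, rfl⟩ := hpr
  rw [Finset.mem_filter] at hz
  by_cases hF : ((XV i p (!c) : X3CVert S m r q), (SB s c : X3CVert S m r q)) ∈ F
  · refine Finset.mem_union_right _ (Finset.mem_filter.2 ⟨hF, rfl⟩)
  · refine Finset.mem_union_left _ (Finset.mem_biUnion.2 ⟨(s, c), Finset.mem_univ _, ?_⟩)
    exact Finset.mem_image.2 ⟨(i, p), Finset.mem_filter.2
      ⟨Finset.mem_univ _, hz.2, hF⟩, rfl⟩

/-- disjoint split of `F` by arc signature -/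
lemma F_split :
    (F.filter fun pr => sig pr = (1, 0)).card + (F.filter fun pr => sig pr = (0, 0)).card +
      (F.filter fun pr => sig pr = (1, 2)).card +
      (F.filter fun pr =>
        ¬(sig pr = (1, 0) ∨ sig pr = (0, 0) ∨ sig pr = (1, 2))).card ≤ F.card := by
  classical
  have d12 : Disjoint (F.filter fun pr => sig pr = (1, 0))
      (F.filter fun pr => sig pr = (0, 0)) := by
    rw [Finset.disjoint_left]; intro a ha hb
    rw [Finset.mem_filter] at ha hb
    exact absurd (ha.2.symm.trans hb.2) (by decide)
  have d13 : Disjoint ((F.filter fun pr => sig pr = (1, 0)) ∪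
      (F.filter fun pr => sig pr = (0, 0)))
      (F.filter fun pr => sig pr = (1, 2)) := by
    rw [Finset.disjoint_left]; intro a ha hb
    rw [Finset.mem_filter] at hb
    rcases Finset.mem_union.1 ha with h | h <;> rw [Finset.mem_filter] at h <;>
      exact absurd (h.2.symm.trans hb.2) (by decide)
  have d14 : Disjoint ((F.filter fun pr => sig pr = (1, 0)) ∪
      (F.filter fun pr => sig pr = (0, 0)) ∪ (F.filter fun pr => sig pr = (1, 2)))
      (F.filter fun pr =>
        ¬(sig pr = (1, 0) ∨ sig pr = (0, 0) ∨ sig pr = (1, 2))) := by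
    rw [Finset.disjoint_left]; intro a ha hb
    rw [Finset.mem_filter] at hb
    rcases Finset.mem_union.1 ha with h | h
    · rcases Finset.mem_union.1 h with h' | h' <;> rw [Finset.mem_filter] at h' <;>
        exact hb.2 (by tauto)
    · rw [Finset.mem_filter] at h
      exact hb.2 (by tauto)
  have hsub : (F.filter fun pr => sig pr = (1, 0)) ∪
      (F.filter fun pr => sig pr = (0, 0)) ∪ (F.filter fun pr => sig pr = (1, 2)) ∪
      (F.filter fun pr =>
        ¬(sig pr = (1, 0) ∨ sig pr = (0, 0) ∨ sig pr = (1, 2))) ⊆ F := by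
    intro a ha
    rcases Finset.mem_union.1 ha with h | h
    · rcases Finset.mem_union.1 h with h' | h'
      · rcases Finset.mem_union.1 h' with h'' | h''
        · exact Finset.filter_subset _ _ h''
        · exact Finset.filter_subset _ _ h''
      · exact Finset.filter_subset _ _ h'
    · exact Finset.filter_subset _ _ h
  calc (F.filter fun pr => sig pr = (1, 0)).card +
        (F.filter fun pr => sig pr = (0, 0)).card +
        (F.filter fun pr => sig pr = (1, 2)).card +
        (F.filter fun pr =>
          ¬(sig pr = (1, 0) ∨ sig pr = (0, 0) ∨ sig pr = (1, 2))).card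
      = ((F.filter fun pr => sig pr = (1, 0)) ∪
        (F.filter fun pr => sig pr = (0, 0)) ∪ (F.filter fun pr => sig pr = (1, 2)) ∪
        (F.filter fun pr =>
          ¬(sig pr = (1, 0) ∨ sig pr = (0, 0) ∨ sig pr = (1, 2)))).card := by
        rw [Finset.card_union_of_disjoint d14, Finset.card_union_of_disjoint d13,
          Finset.card_union_of_disjoint d12]
    _ ≤ F.card := Finset.card_le_card hsub

/-- the master per-slot inequality -/
lemma master_slot (hT : Explains T (fun v : X3CVert S m r q => v.2) (Gp C F))
    (hFc : F.card ≤ k) (hk0 : 0 < k) (hq3 : q = 3 * k)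
    (ht1 : 1 ≤ t) (hm : t < m) (hS : Fintype.card S = 3 * t)
    (hC3 : ∀ i, (C i).card = 3) (hr : r = 18 * t ^ 2)
    (hk : k = 6 * r * (m - t) + r - 18 * t) (s : S) (c : Bool) :
    18 * t + ((F.filter fun pr => sig pr = (0, 0)).card +
      (F.filter fun pr => sig pr = (1, 2)).card +
      (F.filter fun pr =>
        ¬(sig pr = (1, 0) ∨ sig pr = (0, 0) ∨ sig pr = (1, 2))).card) ≤
      (sv C F s c).card := by
  classical
  -- numeric setup
  have htt : t ≤ t * t := Nat.le_mul_of_pos_left t (by omega)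
  have hrtt : r = 18 * (t * t) := by rw [hr]; ring
  have hr18 : 18 * t ≤ r := by omega
  obtain ⟨d, hd⟩ : ∃ d, m = t + d := ⟨m - t, by omega⟩
  have hd1 : 1 ≤ d := by omega
  -- master chain
  have ha : (origXS C : Finset (X3CVert S m r q × X3CVert S m r q)).card ≤
      (svArcs C F).card + (F.filter fun pr => sig pr = (1, 0)).card :=
    le_trans (Finset.card_le_card origXS_sub) (Finset.card_union_le _ _)
  have hb := origXS_card (r := r) (q := q) (m := m) hC3
  have hc := svArcs_card (C := C) (F := F)
  have hd' := F_split (F := F)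
  -- bound the sum by the single slot
  have he : ∑ sc : S × Bool, (sv C F sc.1 sc.2).card ≤
      (sv C F s c).card + (6 * t - 1) * r := by
    have hmem : (s, c) ∈ (Finset.univ : Finset (S × Bool)) := Finset.mem_univ _
    rw [← Finset.sum_erase_add _ _ hmem]
    have h1 : ∑ sc ∈ (Finset.univ : Finset (S × Bool)).erase (s, c),
        (sv C F sc.1 sc.2).card ≤ ((Finset.univ : Finset (S × Bool)).erase (s, c)).card * r := by
      rw [← smul_eq_mul]
      exact Finset.sum_le_card_nsmul _ _ r fun sc _ => sv_card hT hFc hk0 hq3 sc.1 sc.2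
    have h2 : ((Finset.univ : Finset (S × Bool)).erase (s, c)).card = 6 * t - 1 := by
      rw [Finset.card_erase_of_mem hmem, Finset.card_univ, Fintype.card_prod, hS,
        Fintype.card_bool]
      omega
    rw [h2] at h1
    dsimp only
    omega
  -- put it together
  have hF4 : (F.filter fun pr => sig pr = (1, 0)).card +
      ((F.filter fun pr => sig pr = (0, 0)).card +
      (F.filter fun pr => sig pr = (1, 2)).card +
      (F.filter fun pr =>
        ¬(sig pr = (1, 0) ∨ sig pr = (0, 0) ∨ sig pr = (1, 2))).card) ≤ k := by omega
  -- numeric conclusion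
  have e1 : 3 * m * (r * 2) = 6 * (r * t) + 6 * (r * d) := by rw [hd]; ring
  have e2 : (6 * t - 1) * r = 6 * (r * t) - r := by
    rw [Nat.sub_mul, one_mul]; ring_nf
  have e3 : k = 6 * (r * d) + r - 18 * t := by
    rw [hk]
    have : m - t = d := by omega
    rw [this]; ring_nf
  have e4 : r ≤ 6 * (r * t) := by nlinarith
  omega
end Backward2
section Backward3

open Finset

variable {S : Type} [Fintype S] [DecidableEq S] {t m r q k : ℕ}
  {C : Fin m → Finset S} {F : Finset (X3CVert S m r q × X3CVert S m r q)}
  {T : PhyloTree (X3CVert S m r q)}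

/-- a vertex of `X_i` that keeps all its arcs into `Y_i` of color `c` -/
def YgoodSlot (C : Fin m → Finset S) (F : Finset (X3CVert S m r q × X3CVert S m r q))
    (c : Bool) (ip : Fin m × Fin r) : Prop :=
  ∀ pp : Fin q, Gp C F (XV ip.1 ip.2 (!c)) (YV ip.1 pp c)

lemma exists_good_server (hk0 : 0 < k) (hq3 : q = 3 * k) (ht1 : 1 ≤ t) {s : S} {c : Bool}
    (hsv : 18 * t + (F.filter fun pr => sig pr = (1, 2)).card ≤ (sv C F s c).card) :
    ∃ ip ∈ sv C F s c, YgoodSlot C F c ip := by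
  classical
  have hq0 : 0 < q := by omega
  classical
  have hch : ∀ ip : Fin m × Fin r, ∃ pp : Fin q,
      (ip ∈ (sv C F s c).filter (fun ip => ¬ YgoodSlot C F c ip) → ¬ Gp C F (XV ip.1 ip.2 (!c)) (YV ip.1 pp c)) := by
    intro ip
    by_cases h : ip ∈ (sv C F s c).filter (fun ip => ¬ YgoodSlot C F c ip)
    · have h2 := (Finset.mem_filter.1 h).2
      rw [YgoodSlot] at h2
      push_neg at h2
      obtain ⟨pp, hpp⟩ := h2
      exact ⟨pp, fun _ => hpp⟩
    · exact ⟨⟨0, hq0⟩, fun h' => absurd h' h⟩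
  choose gch hgch using hch
  have hbads : ((sv C F s c).filter (fun ip => ¬ YgoodSlot C F c ip)).card ≤ (F.filter fun pr => sig pr = (1, 2)).card := by
    refine Finset.card_le_card_of_injOn
      (fun ip => ((XV ip.1 ip.2 (!c) : X3CVert S m r q),
        (YV ip.1 (gch ip) c : X3CVert S m r q))) ?_ ?_
    · intro ip hip
      refine Finset.mem_filter.2 ⟨?_, rfl⟩
      exact Gp_del ((arcs_XY C ip.1 ip.1 ip.2 (gch ip) (!c) c).2
        ⟨rfl, by cases c <;> simp⟩) (hgch ip hip)
    · intro ip hip ip' hip' he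
      have h1 := congrArg Prod.fst he
      simp only [XV, Prod.mk.injEq, Sum.inr.injEq, Sum.inl.injEq] at h1
      exact Prod.ext h1.1.1 h1.1.2
  have hsd : ((sv C F s c) \ (sv C F s c).filter (fun ip => ¬ YgoodSlot C F c ip)).Nonempty := by
    rw [← Finset.card_pos, Finset.card_sdiff_of_subset (Finset.filter_subset _ _)]
    omega
  obtain ⟨ip, hip⟩ := hsd
  rw [Finset.mem_sdiff] at hip
  refine ⟨ip, hip.1, ?_⟩
  by_contra hbad
  exact hip.2 (Finset.mem_filter.2 ⟨hip.1, hbad⟩)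

/-- out-neighbourhood of an `S`-vertex inside the `S`-part -/
def outS (C : Fin m → Finset S) (F : Finset (X3CVert S m r q × X3CVert S m r q))
    (s : S) (c : Bool) : Finset S :=
  Finset.univ.filter fun s' => Gp C F (SB s c) (SB s' (!c))

lemma outS_card_le (hT : Explains T (fun v : X3CVert S m r q => v.2) (Gp C F))
    (hFc : F.card ≤ k) (hk0 : 0 < k) (hq3 : q = 3 * k)
    (ht1 : 1 ≤ t) (hm : t < m) (hS : Fintype.card S = 3 * t)
    (hC3 : ∀ i, (C i).card = 3) (hr : r = 18 * t ^ 2)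
    (hk : k = 6 * r * (m - t) + r - 18 * t) (s : S) (c : Bool) :
    (outS C F s c).card ≤ 3 := by
  classical
  by_cases hne : (outS C F s c).Nonempty
  · obtain ⟨s', hs'⟩ := hne
    have hGs' : Gp C F (SB s c) (SB s' (!c)) := (Finset.mem_filter.1 hs').2
    have hsv' := master_slot hT hFc hk0 hq3 ht1 hm hS hC3 hr hk s' (!c)
    obtain ⟨ip', hip'm, hip'g⟩ := exists_good_server (C := C) (F := F) hk0 hq3 ht1
      (s := s') (c := !c) (by omega)
    have hx' : Gp C F (XV ip'.1 ip'.2 (!(!c))) (SB s' (!c)) := sv_G hip'm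
    rcases conf hT hGs' hx' with hdom | hdom
    · have hsub : outS C F s c ⊆ C ip'.1 := by
        intro s'' hs''
        have hG2 : Gp C F (XV ip'.1 ip'.2 (!(!c))) (SB s'' (!c)) :=
          hdom _ ((Finset.mem_filter.1 hs'').2)
        have hsv'' := master_slot hT hFc hk0 hq3 ht1 hm hS hC3 hr hk s'' (!c)
        have hne'' : (sv C F s'' (!c)).Nonempty := Finset.card_pos.1 (by omega)
        obtain ⟨ipp, hipp⟩ := hne''
        have heq : ip'.1 = ipp.1 := same_index hT hFc hk0 hq3 hG2 (sv_G hipp)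
        rw [heq]
        exact sv_C hipp
      exact le_trans (Finset.card_le_card hsub) (le_of_eq (hC3 ip'.1))
    · exfalso
      refine cardF_big hFc hk0 hq3
        (fun pp => ((SB s c : X3CVert S m r q), (YV ip'.1 pp (!c) : X3CVert S m r q)))
        ?_ ?_
      · intro pp
        have h1 : Gp C F (XV ip'.1 ip'.2 (!(!c))) (YV ip'.1 pp (!c)) := hip'g pp
        exact Gp_memF (fun h => (arcs_SY' C s ip'.1 pp c (!c)).1 h) (hdom _ h1)
      · intro pp pp' he
        have h1 := congrArg Prod.snd he
        simpa [YV] using h1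
  · rw [Finset.not_nonempty_iff_eq_empty] at hne
    rw [hne]
    simp

/-- all original arcs inside the `S`-part -/
def origSS : Finset (X3CVert S m r q × X3CVert S m r q) :=
  (Finset.univ : Finset (S × S × Bool)).image fun z =>
    ((SB z.1 z.2.2 : X3CVert S m r q), (SB z.2.1 (!z.2.2) : X3CVert S m r q))

lemma origSS_card (hS : Fintype.card S = 3 * t) :
    (origSS : Finset (X3CVert S m r q × X3CVert S m r q)).card = 18 * (t * t) := by
  rw [origSS, Finset.card_image_of_injective]
  · rw [Finset.card_univ, Fintype.card_prod, Fintype.card_prod, Fintype.card_bool, hS]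
    ring
  · rintro ⟨s, s', c⟩ ⟨w, w', c'⟩ he
    simp only [SB, Prod.mk.injEq, Sum.inl.injEq] at he
    simp_all

/-- the surviving arcs of the `S`-part, grouped by source -/
def survSS (C : Fin m → Finset S) (F : Finset (X3CVert S m r q × X3CVert S m r q)) :
    Finset (X3CVert S m r q × X3CVert S m r q) :=
  (Finset.univ : Finset (S × Bool)).biUnion fun sc =>
    (outS C F sc.1 sc.2).image fun s' =>
      ((SB sc.1 sc.2 : X3CVert S m r q), (SB s' (!sc.2) : X3CVert S m r q))

lemma origSS_sub :
    (origSS : Finset (X3CVert S m r q × X3CVert S m r q)) ⊆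
      survSS C F ∪ F.filter fun pr => sig pr = (0, 0) := by
  intro pr hpr
  rw [origSS, Finset.mem_image] at hpr
  obtain ⟨⟨s, s', c⟩, -, rfl⟩ := hpr
  by_cases hF : ((SB s c : X3CVert S m r q), (SB s' (!c) : X3CVert S m r q)) ∈ F
  · exact Finset.mem_union_right _ (Finset.mem_filter.2 ⟨hF, rfl⟩)
  · refine Finset.mem_union_left _ (Finset.mem_biUnion.2 ⟨(s, c), Finset.mem_univ _, ?_⟩)
    refine Finset.mem_image.2 ⟨s', ?_, rfl⟩
    refine Finset.mem_filter.2 ⟨Finset.mem_univ _, ?_⟩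
    exact Gp_of_arc ((arcs_SS C s s' c (!c)).2 (bool_self_ne c)) hF

lemma survSS_card_le :
    (survSS C F).card ≤ ∑ sc : S × Bool, (outS C F sc.1 sc.2).card := by
  refine le_trans (Finset.card_biUnion_le) ?_
  exact Finset.sum_le_sum fun sc _ => Finset.card_image_le

lemma FS_lower (hT : Explains T (fun v : X3CVert S m r q => v.2) (Gp C F))
    (hFc : F.card ≤ k) (hk0 : 0 < k) (hq3 : q = 3 * k)
    (ht1 : 1 ≤ t) (hm : t < m) (hS : Fintype.card S = 3 * t)
    (hC3 : ∀ i, (C i).card = 3) (hr : r = 18 * t ^ 2)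
    (hk : k = 6 * r * (m - t) + r - 18 * t) :
    18 * (t * t) - 18 * t ≤ (F.filter fun pr => sig pr = (0, 0)).card := by
  have h1 : (origSS : Finset (X3CVert S m r q × X3CVert S m r q)).card ≤
      (survSS C F).card + (F.filter fun pr => sig pr = (0, 0)).card :=
    le_trans (Finset.card_le_card origSS_sub) (Finset.card_union_le _ _)
  have h2 := origSS_card (t := t) (m := m) (r := r) (q := q) hS
  have h3 := survSS_card_le (C := C) (F := F)
  have h4 : ∑ sc : S × Bool, (outS C F sc.1 sc.2).card ≤ 18 * t := by
    have h5 : ∑ sc : S × Bool, (outS C F sc.1 sc.2).card ≤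
        (Finset.univ : Finset (S × Bool)).card * 3 := by
      rw [← smul_eq_mul]
      exact Finset.sum_le_card_nsmul _ _ 3 fun sc _ =>
        outS_card_le hT hFc hk0 hq3 ht1 hm hS hC3 hr hk sc.1 sc.2
    rw [Finset.card_univ, Fintype.card_prod, Fintype.card_bool, hS] at h5
    omega
  omega

end Backward3
section Backward4

open Finset

variable {S : Type} [Fintype S] [DecidableEq S] {t m r q k : ℕ}
  {C : Fin m → Finset S} {F : Finset (X3CVert S m r q × X3CVert S m r q)}

lemma backward_main (hm : t < m) (hS : Fintype.card S = 3 * t)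
    (hC3 : ∀ i, (C i).card = 3) (hr : r = 18 * t ^ 2)
    (hq : q = 3 * (6 * r * (m - t) + r - 18 * t))
    (hk : k = 6 * r * (m - t) + r - 18 * t)
    (hFc : F.card ≤ k)
    (hB : IsBMG
      (fun u v => (x3cArcs C u v ∧ (u, v) ∉ F) ∨ (¬ x3cArcs C u v ∧ (u, v) ∈ F))
      (fun v : X3CVert S m r q => v.2)) :
    ∃ I : Finset (Fin m), ∀ s : S, ∃! i : Fin m, i ∈ I ∧ s ∈ C i := by
  classical
  obtain ⟨T, hT0⟩ := hB
  have hT : Explains T (fun v : X3CVert S m r q => v.2) (Gp C F) := hT0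
  -- numeric facts
  have ht1 : 1 ≤ t := by
    have h1 := Finset.card_le_univ (C ⟨0, by omega⟩)
    rw [hS, hC3] at h1
    omega
  have htt : t ≤ t * t := Nat.le_mul_of_pos_left t (by omega)
  have hrtt : r = 18 * (t * t) := by rw [hr]; ring
  have hr18 : 18 * t ≤ r := by omega
  have hr0 : 0 < r := by omega
  have hk0 : 0 < k := by
    have hd1 : 1 ≤ m - t := by omega
    have hB0 : 0 < 6 * r * (m - t) := Nat.mul_pos (by omega) (by omega)
    rw [hk]
    generalize 6 * r * (m - t) = B at hB0 ⊢
    omega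
  have hq3 : q = 3 * k := by rw [hq, hk]
  -- the master inequalities and the cascade of equalities
  have hmaster := fun (s : S) (c : Bool) =>
    master_slot hT hFc hk0 hq3 ht1 hm hS hC3 hr hk s c
  have hFS := FS_lower hT hFc hk0 hq3 ht1 hm hS hC3 hr hk
  obtain ⟨s₀⟩ : Nonempty S := Fintype.card_pos_iff.mp (by omega)
  have hBle : (F.filter fun pr => sig pr = (0, 0)).card ≤ r - 18 * t := by
    have h1 := hmaster s₀ true
    have h2 := sv_card hT hFc hk0 hq3 s₀ true
    omega
  have hX0 : (F.filter fun pr => sig pr = (1, 2)).card = 0 := by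
    have h1 := hmaster s₀ true
    have h2 := sv_card hT hFc hk0 hq3 s₀ true
    omega
  have hO0 : (F.filter fun pr =>
      ¬(sig pr = (1, 0) ∨ sig pr = (0, 0) ∨ sig pr = (1, 2))).card = 0 := by
    have h1 := hmaster s₀ true
    have h2 := sv_card hT hFc hk0 hq3 s₀ true
    omega
  have hsvr : ∀ (s : S) (c : Bool), (sv C F s c).card = r := by
    intro s c
    have h1 := hmaster s c
    have h2 := sv_card hT hFc hk0 hq3 s c
    omega
  have hsig : ∀ pr ∈ F, sig pr = ((1 : ℕ), (0 : ℕ)) ∨ sig pr = ((0 : ℕ), (0 : ℕ)) := by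
    intro pr hpr
    by_cases h1 : sig pr = ((1 : ℕ), (0 : ℕ))
    · exact Or.inl h1
    by_cases h2 : sig pr = ((0 : ℕ), (0 : ℕ))
    · exact Or.inr h2
    exfalso
    by_cases h3 : sig pr = ((1 : ℕ), (2 : ℕ))
    · have : 0 < (F.filter fun pr => sig pr = (1, 2)).card :=
        Finset.card_pos.2 ⟨pr, Finset.mem_filter.2 ⟨hpr, h3⟩⟩
      omega
    · have : 0 < (F.filter fun pr =>
          ¬(sig pr = (1, 0) ∨ sig pr = (0, 0) ∨ sig pr = (1, 2))).card :=
        Finset.card_pos.2 ⟨pr, Finset.mem_filter.2 ⟨hpr, by tauto⟩⟩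
      omega
  -- each S-vertex has exactly 3 out-neighbours in the S-part
  have hsurv18 : 18 * t ≤ ∑ sc : S × Bool, (outS C F sc.1 sc.2).card := by
    have h1 : (origSS : Finset (X3CVert S m r q × X3CVert S m r q)).card ≤
        (survSS C F).card + (F.filter fun pr => sig pr = (0, 0)).card :=
      le_trans (Finset.card_le_card origSS_sub) (Finset.card_union_le _ _)
    have h2 := origSS_card (t := t) (m := m) (r := r) (q := q) hS
    have h3 := survSS_card_le (C := C) (F := F)
    omega
  have hout3 : ∀ (s : S) (c : Bool), (outS C F s c).card = 3 := by
    intro s c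
    have hle := outS_card_le hT hFc hk0 hq3 ht1 hm hS hC3 hr hk s c
    have hmem := Finset.mem_univ ((s, c) : S × Bool)
    have hsum := hsurv18
    rw [← Finset.sum_erase_add _ _ hmem] at hsum
    have h1 : ∑ sc ∈ (Finset.univ : Finset (S × Bool)).erase (s, c),
        (outS C F sc.1 sc.2).card ≤
        ((Finset.univ : Finset (S × Bool)).erase (s, c)).card * 3 := by
      rw [← smul_eq_mul]
      exact Finset.sum_le_card_nsmul _ _ 3 fun sc _ =>
        outS_card_le hT hFc hk0 hq3 ht1 hm hS hC3 hr hk sc.1 sc.2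
    have h2 : ((Finset.univ : Finset (S × Bool)).erase (s, c)).card = 6 * t - 1 := by
      rw [Finset.card_erase_of_mem hmem, Finset.card_univ, Fintype.card_prod, hS,
        Fintype.card_bool]
      omega
    rw [h2] at h1
    dsimp only at hsum
    omega
  -- pick a server in each slot
  have hne : ∀ (s : S) (c : Bool), ∃ ip : Fin m × Fin r, ip ∈ sv C F s c := by
    intro s c
    have : 0 < (sv C F s c).card := by rw [hsvr]; omega
    exact Finset.card_pos.1 this
  choose g hg using hne
  -- the key lca-argument
  have hend : ∀ (s : S) (c : Bool) (s' : S), s' ∈ outS C F s c →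
      (g s' (!c)).1 = (g s c).1 := by
    intro s c s' hs'
    have hGs' : Gp C F (SB s c) (SB s' (!c)) := (Finset.mem_filter.1 hs').2
    have hx : Gp C F (XV (g s c).1 (g s c).2 (!c)) (SB s c) := sv_G (hg s c)
    have hx3 : Gp C F (XV (g s' (!c)).1 (g s' (!c)).2 (!(!c))) (SB s' (!c)) :=
      sv_G (hg s' (!c))
    rcases T.lcaSet_comparable
        (T.mem_lcaSet_right (XV (g s c).1 (g s c).2 (!c)) (SB s c))
        (T.mem_lcaSet_left (SB s c) (SB s' (!c))) with hc1 | hc1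
    · exfalso
      have hxin : (XV (g s c).1 (g s c).2 (!c) : X3CVert S m r q) ∈
          T.lcaSet (SB s c) (SB s' (!c)) := hc1 (T.mem_lcaSet_left _ _)
      have hGx : Gp C F (SB s c) (XV (g s c).1 (g s c).2 (!c)) :=
        arc_of_mem hT hGs' hxin rfl
      have hF : ((SB s c : X3CVert S m r q), (XV (g s c).1 (g s c).2 (!c) : X3CVert S m r q)) ∈ F :=
        Gp_memF (fun h => (arcs_SX C s (g s c).1 (g s c).2 c (!c)).1 h) hGx
      rcases hsig _ hF with h | h <;> exact absurd h (by dsimp only [sig, srt, SB, XV]; decide)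
    · have hs'in : (SB s' (!c) : X3CVert S m r q) ∈
          T.lcaSet (XV (g s c).1 (g s c).2 (!c)) (SB s c) :=
        hc1 (T.mem_lcaSet_right _ _)
      rcases T.lcaSet_comparable hs'in
          (T.mem_lcaSet_right (XV (g s' (!c)).1 (g s' (!c)).2 (!(!c))) (SB s' (!c)))
          with hc2 | hc2
      · have hxin : (XV (g s c).1 (g s c).2 (!c) : X3CVert S m r q) ∈
            T.lcaSet (XV (g s' (!c)).1 (g s' (!c)).2 (!(!c))) (SB s' (!c)) :=
          hc2 (T.mem_lcaSet_left _ _)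
        have hGx : Gp C F (XV (g s' (!c)).1 (g s' (!c)).2 (!(!c)))
            (XV (g s c).1 (g s c).2 (!c)) :=
          arc_of_mem hT hx3 hxin (by cases c <;> rfl)
        rcases hGx with ⟨harc, -⟩ | ⟨-, hF⟩
        · exact ((arcs_XX C _ _ _ _ _ _).1 harc).1
        · rcases hsig _ hF with h | h <;> exact absurd h (by dsimp only [sig, srt, SB, XV]; decide)
      · have hxin : (XV (g s' (!c)).1 (g s' (!c)).2 (!(!c)) : X3CVert S m r q) ∈
            T.lcaSet (XV (g s c).1 (g s c).2 (!c)) (SB s c) :=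
          hc2 (T.mem_lcaSet_left _ _)
        have hGx : Gp C F (XV (g s c).1 (g s c).2 (!c))
            (XV (g s' (!c)).1 (g s' (!c)).2 (!(!c))) :=
          arc_of_mem hT hx hxin (by cases c <;> rfl)
        rcases hGx with ⟨harc, -⟩ | ⟨-, hF⟩
        · exact (((arcs_XX C _ _ _ _ _ _).1 harc).1).symm
        · rcases hsig _ hF with h | h <;> exact absurd h (by dsimp only [sig, srt, SB, XV]; decide)
  -- the out-neighbourhoods are exactly the triples
  have houteq : ∀ (s : S) (c : Bool), outS C F s c = C (g s c).1 := by
    intro s c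
    have hsub : outS C F s c ⊆ C (g s c).1 := by
      intro s' hs'
      have h1 : s' ∈ C (g s' (!c)).1 := sv_C (hg s' (!c))
      rwa [hend s c s' hs'] at h1
    exact Finset.eq_of_subset_of_card_le hsub (le_of_eq (by rw [hC3, hout3 s c]))
  -- extract the exact cover
  refine ⟨Finset.univ.image (fun s => (g s true).1), fun s =>
    ⟨(g s true).1, ⟨Finset.mem_image_of_mem _ (Finset.mem_univ s), sv_C (hg s true)⟩, ?_⟩⟩
  rintro i' ⟨hi'I, hsCi'⟩
  obtain ⟨u, -, hu⟩ := Finset.mem_image.1 hi'I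
  have h1 : s ∈ outS C F u true := by
    rw [houteq u true, hu]
    exact hsCi'
  have h2 := hend u true s h1
  have h3 : s ∈ outS C F s false := by
    rw [houteq s false]
    have h4 := sv_C (hg s false)
    simpa using h2 ▸ h4
  have h5 := hend s false s h3
  simp only [Bool.not_true] at h2
  simp only [Bool.not_false] at h5
  rw [← hu, ← h2, h5]
end Backward4
section Final

/-- `𝒞` contains an exact cover of `𝔖` iff the constructed
properly 2-colored digraph can be turned into a BMG by editing at most
`k = 6r(m−t)+r−18t` arcs; moreover, in the affirmative case the modification
set can be chosen to consist of arc deletions only. -/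
theorem x3c_reduction (t m : ℕ) (hm : t < m)
    (S : Type) [Fintype S] [DecidableEq S] (hS : Fintype.card S = 3 * t)
    (C : Fin m → Finset S) (hC3 : ∀ i, (C i).card = 3)
    (hCinj : Function.Injective C)
    (r q k : ℕ) (hr : r = 18 * t ^ 2)
    (hq : q = 3 * (6 * r * (m - t) + r - 18 * t))
    (hk : k = 6 * r * (m - t) + r - 18 * t) :
    ((∃ I : Finset (Fin m), ∀ s : S, ∃! i : Fin m, i ∈ I ∧ s ∈ C i) ↔
      (∃ F : Finset (X3CVert S m r q × X3CVert S m r q),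
        (∀ p ∈ F, p.1 ≠ p.2) ∧ F.card ≤ k ∧
        IsBMG
          (fun u v =>
            (x3cArcs C u v ∧ (u, v) ∉ F) ∨ (¬ x3cArcs C u v ∧ (u, v) ∈ F))
          (fun v => v.2))) ∧
    ((∃ I : Finset (Fin m), ∀ s : S, ∃! i : Fin m, i ∈ I ∧ s ∈ C i) →
      (∃ F : Finset (X3CVert S m r q × X3CVert S m r q),
        (∀ p ∈ F, x3cArcs C p.1 p.2) ∧ F.card ≤ k ∧
        IsBMG
          (fun u v =>
            (x3cArcs C u v ∧ (u, v) ∉ F) ∨ (¬ x3cArcs C u v ∧ (u, v) ∈ F))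
          (fun v => v.2))) := by
  have hfwd : (∃ I : Finset (Fin m), ∀ s : S, ∃! i : Fin m, i ∈ I ∧ s ∈ C i) →
      (∃ F : Finset (X3CVert S m r q × X3CVert S m r q),
        (∀ p ∈ F, x3cArcs C p.1 p.2) ∧ F.card ≤ k ∧
        IsBMG
          (fun u v =>
            (x3cArcs C u v ∧ (u, v) ∉ F) ∨ (¬ x3cArcs C u v ∧ (u, v) ∈ F))
          (fun v => v.2)) := by
    rintro ⟨I, hI⟩
    have hex : ∀ s : S, ∃ i : Fin m, i ∈ I ∧ s ∈ C i := fun s => (hI s).exists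
    choose f hfI hfC using hex
    have hfU : ∀ s s', s' ∈ C (f s) → f s' = f s := by
      intro s s' h
      obtain ⟨i0, hP, huniq⟩ := hI s'
      rw [huniq (f s') ⟨hfI s', hfC s'⟩, huniq (f s) ⟨hfI s, h⟩]
    exact forward_main C f hm hS hC3 hr hq hk hfC hfU
  refine ⟨⟨?_, ?_⟩, hfwd⟩
  · intro h
    obtain ⟨F, hFa, hFc, hFb⟩ := hfwd h
    exact ⟨F, fun p hp he => arcs_irrefl C p.2 (he ▸ hFa p hp), hFc, hFb⟩
  · rintro ⟨F, hFne, hFc, hFb⟩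
    exact backward_main hm hS hC3 hr hq hk hFc hFb

end Final
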